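/- arXiv:1409.4742 — 4 statements merged into one kernel-verified Lean document; each statement's English description precedes it below -/
import Mathlib

section
/- Euler's ratio-sum relation (algebraic core): if real numbers α, β, γ and P, Q, R > 0 satisfy γR = P + Q, αP = Q + R, βQ = R + P, then αβγ = α + β + γ + 2. -/
/-!
The three relations say that `(P, Q, R)` lies in the kernel of the matrix
`!![α, -1, -1; -1, β, -1; -1, -1, γ]`. A nonzero kernel vector forces the determinant to
vanish, and that determinant is `α * β * γ - α - β - γ - 2`.
-/

open Matrix

section

variable {A : Type*} [CommRing A]

theorem det_cevianMatrix (α β γ : A) :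
    !![α, -1, -1; -1, β, -1; -1, -1, γ].det = α * β * γ - (α + β + γ + 2) := by
  simp only [det_fin_three, of_apply, cons_val', cons_val_zero, cons_val_fin_one, cons_val_one,
    cons_val, mul_neg, mul_one, neg_neg, one_mul, neg_mul]
  ring

theorem euler_relation_of_mem_ker [IsDomain A] {α β γ P Q R : A} (hv : ![P, Q, R] ≠ 0)
    (h1 : γ * R = P + Q) (h2 : α * P = Q + R) (h3 : β * Q = R + P) :
    α * β * γ = α + β + γ + 2 := by
  have hker : !![α, -1, -1; -1, β, -1; -1, -1, γ] *ᵥ ![P, Q, R] = 0 := by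
    ext i
    fin_cases i <;>
      simp only [mulVec, dotProduct, Fin.sum_univ_three, Fin.zero_eta, Fin.mk_one, Fin.reduceFinMk,
        of_apply, cons_val', cons_val_fin_one, cons_val_zero, cons_val_one, cons_val, neg_mul,
        one_mul, Pi.zero_apply]
    · linear_combination h2
    · linear_combination h3
    · linear_combination h1
  have hdet := exists_mulVec_eq_zero_iff.mp ⟨_, hv, hker⟩
  rw [det_cevianMatrix] at hdet
  exact sub_eq_zero.mp hdet

end

theorem euler_ratio_sum_algebraic_general (α β γ P Q R : ℝ)
    (hP : 0 < P)
    (h1 : γ * R = P + Q) (h2 : α * P = Q + R) (h3 : β * Q = R + P) :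
    α * β * γ = α + β + γ + 2 := by
  have hv : ![P, Q, R] ≠ 0 := fun h => hP.ne' (congrFun h 0)
  exact euler_relation_of_mem_ker hv h1 h2 h3

/-- Algebraic core of Euler's ratio-sum relation. -/
theorem euler_ratio_sum_algebraic (α β γ P Q R : ℝ)
    (hP : 0 < P) (hQ : 0 < Q) (hR : 0 < R)
    (h1 : γ * R = P + Q) (h2 : α * P = Q + R) (h3 : β * Q = R + P) :
    α * β * γ = α + β + γ + 2 :=
  euler_ratio_sum_algebraic_general α β γ P Q R hP h1 h2 h3
end

section
/- Euler's ratio-sum theorem for Euclidean triangles: if D, E, F lie on sides BC, CA, AB of a triangle ABC, and the cevians AD, BE, CF meet at a common interior point O, then (AO/OD)·(BO/OE)·(CO/OF) = AO/OD + BO/OE + CO/OF + 2. -/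
/-!
Let `(a, b, c)` be the barycentric coordinates of `O` with respect to `ABC`. Since `D` lies on
`BC`, the point `O` of `AD` is `lineMap D A a`, so `AO / OD = (1 - a) / a`, and likewise for the
other two cevians. Writing `1 - a = b + c` etc., the claim becomes the rational identity
`(b + c)(c + a)(a + b) = abc · ((b + c)/a + (c + a)/b + (a + b)/c + 2)`.
-/

open AffineMap

theorem one_sub_div_mul_one_sub_div_mul_one_sub_div_eq_add_add_add_two {K : Type*} [Field K]
    {a b c : K}
    (ha : a ≠ 0) (hb : b ≠ 0) (hc : c ≠ 0) (habc : a + b + c = 1) :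
    (1 - a) / a * ((1 - b) / b) * ((1 - c) / c) =
      (1 - a) / a + (1 - b) / b + (1 - c) / c + 2 := by
  obtain rfl : c = 1 - a - b := by linear_combination habc
  field_simp
  ring

section Cevians

variable {k V : Type*} [CommRing k] [AddCommGroup V] [Module k V] {A B C : V}

theorem AffineIndependent.eq_of_smul_add_smul_add_smul_eq (h : AffineIndependent k ![A, B, C])
    {a b c a' b' c' : k} (hw : a + b + c = a' + b' + c')
    (hp : a • A + b • B + c • C = a' • A + b' • B + c' • C) :
    a = a' ∧ b = b' ∧ c = c' := by
  have := h.eq_of_sum_eq_sum (s := Finset.univ) (w₁ := ![a, b, c]) (w₂ := ![a', b', c'])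
    (by simpa [Fin.sum_univ_three] using hw) (by simpa [Fin.sum_univ_three] using hp)
  exact ⟨this 0 (by simp), this 1 (by simp), this 2 (by simp)⟩

theorem lineMap_lineMap_eq_smul_add_smul_add_smul (A B C : V) (a u : k) :
    lineMap (lineMap B C u) A a = a • A + ((1 - a) * (1 - u)) • B + ((1 - a) * u) • C := by
  simp only [lineMap_apply_module]
  module

theorem AffineIndependent.add_add_eq_one_of_lineMap_eq (h : AffineIndependent k ![A, B, C])
    {D E F O : V} {a b c : k}
    (hD : D ∈ line[k, B, C]) (hE : E ∈ line[k, C, A]) (hF : F ∈ line[k, A, B])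
    (hOD : lineMap D A a = O) (hOE : lineMap E B b = O) (hOF : lineMap F C c = O) :
    a + b + c = 1 := by
  obtain ⟨u, rfl⟩ := mem_affineSpan_pair_iff_exists_lineMap_eq.1 hD
  obtain ⟨v, rfl⟩ := mem_affineSpan_pair_iff_exists_lineMap_eq.1 hE
  obtain ⟨w, rfl⟩ := mem_affineSpan_pair_iff_exists_lineMap_eq.1 hF
  rw [lineMap_lineMap_eq_smul_add_smul_add_smul] at hOD hOE hOF
  have hAB : a • A + ((1 - a) * (1 - u)) • B + ((1 - a) * u) • C =
      ((1 - b) * v) • A + b • B + ((1 - b) * (1 - v)) • C := by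
    linear_combination (norm := module) hOD.trans hOE.symm
  have hAC : a • A + ((1 - a) * (1 - u)) • B + ((1 - a) * u) • C =
      ((1 - c) * (1 - w)) • A + ((1 - c) * w) • B + c • C := by
    linear_combination (norm := module) hOD.trans hOF.symm
  have hB := (h.eq_of_smul_add_smul_add_smul_eq (by ring) hAB).2.1
  have hC := (h.eq_of_smul_add_smul_add_smul_eq (by ring) hAC).2.2
  linear_combination -hB - hC

end Cevians

section Metric

variable {V P : Type*} [NormedAddCommGroup V] [NormedSpace ℝ V] [MetricSpace P]
  [NormedAddTorsor V P] {A D O : P}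

theorem Wbtw.exists_lineMap_eq_and_dist_div_dist_eq (hO : Wbtw ℝ A O D) (hOD : dist O D ≠ 0) :
    ∃ a : ℝ, a ≠ 0 ∧ lineMap D A a = O ∧ dist A O / dist O D = (1 - a) / a := by
  obtain ⟨a, ⟨ha₀, ha₁⟩, rfl⟩ := hO.symm
  rw [dist_lineMap_left, mul_ne_zero_iff, norm_ne_zero_iff] at hOD
  refine ⟨a, hOD.1, rfl, ?_⟩
  rw [dist_right_lineMap, dist_lineMap_left, Real.norm_of_nonneg ha₀,
    Real.norm_of_nonneg (sub_nonneg.2 ha₁), mul_div_mul_right _ _ hOD.2]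

end Metric

theorem euler_ratio_sum_euclidean_general
    (A B C D E F O : EuclideanSpace ℝ (Fin 2))
    (hABC : AffineIndependent ℝ ![A, B, C])
    (hD : D ∈ segment ℝ B C) (hE : E ∈ segment ℝ C A) (hF : F ∈ segment ℝ A B)
    (hOD : O ∈ segment ℝ A D) (hOE : O ∈ segment ℝ B E) (hOF : O ∈ segment ℝ C F)
    (hOD' : 0 < dist O D) (hOE' : 0 < dist O E) (hOF' : 0 < dist O F) :
    (dist A O / dist O D) * (dist B O / dist O E) * (dist C O / dist O F) =
      dist A O / dist O D + dist B O / dist O E + dist C O / dist O F + 2 := by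
  obtain ⟨a, ha, hAO, hA⟩ :=
    (mem_segment_iff_wbtw.1 hOD).exists_lineMap_eq_and_dist_div_dist_eq hOD'.ne'
  obtain ⟨b, hb, hBO, hB⟩ :=
    (mem_segment_iff_wbtw.1 hOE).exists_lineMap_eq_and_dist_div_dist_eq hOE'.ne'
  obtain ⟨c, hc, hCO, hC⟩ :=
    (mem_segment_iff_wbtw.1 hOF).exists_lineMap_eq_and_dist_div_dist_eq hOF'.ne'
  have habc : a + b + c = 1 := hABC.add_add_eq_one_of_lineMap_eq
    (mem_segment_iff_wbtw.1 hD).mem_affineSpan (mem_segment_iff_wbtw.1 hE).mem_affineSpan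
    (mem_segment_iff_wbtw.1 hF).mem_affineSpan hAO hBO hCO
  rw [hA, hB, hC]
  exact one_sub_div_mul_one_sub_div_mul_one_sub_div_eq_add_add_add_two ha hb hc habc

/-- Euler's ratio-sum theorem for Euclidean triangles: if cevians `AD`, `BE`, `CF`
of a triangle `ABC` meet at a common point `O`, then
`(AO/OD)(BO/OE)(CO/OF) = AO/OD + BO/OE + CO/OF + 2`. -/
theorem euler_ratio_sum_euclidean
    (A B C D E F O : EuclideanSpace ℝ (Fin 2))
    (hABC : AffineIndependent ℝ ![A, B, C])
    (hD : D ∈ segment ℝ B C) (hE : E ∈ segment ℝ C A) (hF : F ∈ segment ℝ A B)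
    (hOD : O ∈ segment ℝ A D) (hOE : O ∈ segment ℝ B E) (hOF : O ∈ segment ℝ C F)
    (hAO : 0 < dist A O) (hOD' : 0 < dist O D)
    (hBO : 0 < dist B O) (hOE' : 0 < dist O E)
    (hCO : 0 < dist C O) (hOF' : 0 < dist O F) :
    (dist A O / dist O D) * (dist B O / dist O E) * (dist C O / dist O F) =
      dist A O / dist O D + dist B O / dist O E + dist C O / dist O F + 2 :=
  euler_ratio_sum_euclidean_general A B C D E F O hABC hD hE hF hOD hOE hOF hOD' hOE' hOF'
end

section
/- Hyperbolic Ceva theorem: if cevians AD, BE, CF of a hyperbolic triangle ABC (with D on BC, E on CA, F on AB) meet at a common interior point, then (sinh DB / sinh DC) · (sinh EC / sinh EA) · (sinh FA / sinh FB) = 1. -/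
open Real UpperHalfPlane

/-- `Y` lies strictly between `X` and `Z` on the geodesic segment `XZ`
in the hyperbolic plane. -/
def HypBtw (X Y Z : UpperHalfPlane) : Prop :=
  Y ≠ X ∧ Y ≠ Z ∧ dist X Y + dist Y Z = dist X Z

/-!
Map `ℍ` isometrically onto the hyperboloid model, where `cosh (dist z w)` is the Minkowski
pairing of the images. If `Y` lies on the segment `XZ`, then
`sinh (dist Y Z) • X + sinh (dist X Y) • Z - sinh (dist X Z) • Y` is a null vector orthogonal to
the timelike vector `X`, hence zero. The vertices of a nondegenerate triangle have positive Gram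
determinant, so they form a basis, and the two such relations along the cevian `AD` show that the
`B`- and `C`-coordinates of `O` are in the ratio `sinh (dist D C) : sinh (dist B D)`; likewise
for `BE` and `CF`. Multiplying the three ratios gives Ceva's identity, as for barycentric
coordinates in the Euclidean plane.
-/

section LinearAlgebra

variable {R M : Type*} [CommRing R] [AddCommGroup M] [Module R M]

theorem LinearMap.BilinForm.linearIndependent_of_det_ne_zero [NoZeroDivisors R] {ι : Type*}
    [Fintype ι] [DecidableEq ι] (B : LinearMap.BilinForm R M) {v : ι → M}
    (h : (Matrix.of fun i j => B (v i) (v j)).det ≠ 0) : LinearIndependent R v := by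
  refine Fintype.linearIndependent_iff.2 fun g hg =>
    congrFun (Matrix.eq_zero_of_mulVec_eq_zero h ?_)
  ext i
  simpa [Matrix.mulVec, dotProduct, map_sum, mul_comm] using congrArg (B (v i)) hg

theorem LinearIndependent.mul_eq_of_smul_eq_fin_three {a b c v : M}
    (h : LinearIndependent R ![a, b, c]) {x y z k p q r : R} (hv : v = x • a + y • b + z • c)
    (hk : k • v = p • a + q • b + r • c) : k * x = p ∧ k * y = q ∧ k * z = r := by
  have := Fintype.linearIndependent_iff.1 h ![k * x - p, k * y - q, k * z - r] <| by
    simp only [Fin.sum_univ_three, Matrix.cons_val_zero, Matrix.cons_val_one, Matrix.cons_val_two,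
      Matrix.tail_cons, Matrix.head_cons, sub_smul]
    linear_combination (norm := module) hk - k • hv
  exact ⟨sub_eq_zero.1 (this 0), sub_eq_zero.1 (this 1), sub_eq_zero.1 (this 2)⟩

theorem LinearIndependent.exists_eq_fin_three {K V : Type*} [Field K] [AddCommGroup V]
    [Module K V] [FiniteDimensional K V] {a b c : V} (h : LinearIndependent K ![a, b, c])
    (hV : Module.finrank K V = 3) (v : V) : ∃ x y z : K, v = x • a + y • b + z • c := by
  have hv : v ∈ Submodule.span K (Set.range ![a, b, c]) := by
    rw [h.span_eq_top_of_card_eq_finrank' (by simp [hV])]; trivial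
  obtain ⟨g, rfl⟩ := (Submodule.mem_span_range_iff_exists_fun K).1 hv
  exact ⟨g 0, g 1, g 2, by simp [Fin.sum_univ_three]⟩

end LinearAlgebra

noncomputable def minkowski : LinearMap.BilinForm ℝ (Fin 3 → ℝ) :=
  Matrix.toBilin' (Matrix.diagonal ![-1, -1, 1])

theorem minkowski_apply (x y : Fin 3 → ℝ) :
    minkowski x y = x 2 * y 2 - x 0 * y 0 - x 1 * y 1 := by
  simp [minkowski, Matrix.toBilin'_apply', dotProduct, Matrix.mulVec_diagonal, Fin.sum_univ_three]
  ring

theorem eq_zero_of_minkowski_eq_zero {w x : Fin 3 → ℝ} (hw : minkowski w w = 0)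
    (hwx : minkowski w x = 0) (hx : 0 < minkowski x x) : w = 0 := by
  rw [minkowski_apply] at hw hwx hx
  have hw2 : w 2 = 0 := by
    have hcs : (w 2 * x 2) ^ 2 ≤ w 2 ^ 2 * (x 0 ^ 2 + x 1 ^ 2) := by
      rw [show w 2 * x 2 = w 0 * x 0 + w 1 * x 1 by linarith,
        show w 2 ^ 2 = w 0 ^ 2 + w 1 ^ 2 by linarith]
      nlinarith [sq_nonneg (w 0 * x 1 - w 1 * x 0)]
    exact pow_eq_zero_iff two_ne_zero |>.1 <|
      le_antisymm (nonpos_of_mul_nonpos_left (by linarith) hx) (sq_nonneg _)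
  have hw01 : w 0 = 0 ∧ w 1 = 0 := by
    constructor <;> nlinarith [sq_nonneg (w 0), sq_nonneg (w 1)]
  ext i; fin_cases i <;> simp [hw2, hw01]

/-- The standard isometry of the upper half-plane onto the sheet `x₂ > 0` of the hyperboloid
`x₂² - x₀² - x₁² = 1`. -/
noncomputable def toHyperboloid (z : ℍ) : Fin 3 → ℝ :=
  ![z.re / z.im, (z.re ^ 2 + z.im ^ 2 - 1) / (2 * z.im), (z.re ^ 2 + z.im ^ 2 + 1) / (2 * z.im)]

theorem minkowski_toHyperboloid (z w : ℍ) :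
    minkowski (toHyperboloid z) (toHyperboloid w) = cosh (dist z w) := by
  have := z.im_pos.ne'
  have := w.im_pos.ne'
  rw [minkowski_apply, cosh_dist']
  simp [toHyperboloid]
  field_simp
  ring

theorem sinh_smul_toHyperboloid_add_sinh_smul {X Y Z : ℍ} (h : dist X Y + dist Y Z = dist X Z) :
    sinh (dist Y Z) • toHyperboloid X + sinh (dist X Y) • toHyperboloid Z =
      sinh (dist X Z) • toHyperboloid Y := by
  rw [← h, sinh_add, ← sub_eq_zero]
  have hXY := cosh_sq_sub_sinh_sq (dist X Y)
  have hYZ := cosh_sq_sub_sinh_sq (dist Y Z)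
  refine eq_zero_of_minkowski_eq_zero (x := toHyperboloid X) ?_ ?_
    (by simp [minkowski_toHyperboloid])
  all_goals
    simp only [map_add, map_sub, map_smul, LinearMap.add_apply, LinearMap.sub_apply,
      LinearMap.smul_apply, smul_eq_mul, minkowski_toHyperboloid, dist_self, cosh_zero,
      dist_comm Y X, dist_comm Z X, dist_comm Z Y, ← h, cosh_add]
  · linear_combination (-sinh (dist Y Z) ^ 2) * hXY - sinh (dist X Y) ^ 2 * hYZ
  · linear_combination (-sinh (dist Y Z)) * hXY

/-- The left side factors as `(cosh (a + b) - cosh c) * (cosh c - cosh (a - b))`. -/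
theorem cosh_gram_det_pos {a b c : ℝ} (hc : c < a + b) (ha : a < b + c) (hb : b < a + c) :
    0 < 1 + 2 * cosh a * cosh b * cosh c - cosh a ^ 2 - cosh b ^ 2 - cosh c ^ 2 := by
  have hc0 : 0 < c := by linarith
  have hlt : cosh c < cosh (a + b) := by
    rwa [cosh_lt_cosh, abs_of_pos hc0, abs_of_pos (by linarith)]
  have hgt : cosh (a - b) < cosh c := by
    rw [cosh_lt_cosh, abs_of_pos hc0, abs_sub_lt_iff]; constructor <;> linarith
  rw [cosh_add] at hlt
  rw [cosh_sub] at hgt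
  nlinarith [mul_pos (sub_pos.2 hlt) (sub_pos.2 hgt), cosh_sq_sub_sinh_sq a, cosh_sq_sub_sinh_sq b]

theorem smul_toHyperboloid_of_cevian {A B C D O : ℍ} (hO : dist A O + dist O D = dist A D)
    (hD : dist B D + dist D C = dist B C) :
    (sinh (dist B C) * sinh (dist A D)) • toHyperboloid O =
      (sinh (dist B C) * sinh (dist O D)) • toHyperboloid A +
        (sinh (dist A O) * sinh (dist D C)) • toHyperboloid B +
        (sinh (dist A O) * sinh (dist B D)) • toHyperboloid C := by
  linear_combination (norm := module)
    (-sinh (dist B C)) • sinh_smul_toHyperboloid_add_sinh_smul hO -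
      sinh (dist A O) • sinh_smul_toHyperboloid_add_sinh_smul hD

theorem linearIndependent_toHyperboloid {A B C : ℍ} (hAB : dist A B < dist A C + dist C B)
    (hBC : dist B C < dist B A + dist A C) (hCA : dist C A < dist C B + dist B A) :
    LinearIndependent ℝ ![toHyperboloid A, toHyperboloid B, toHyperboloid C] := by
  rw [dist_comm C B] at hAB
  rw [dist_comm B A] at hBC
  rw [dist_comm C A, dist_comm C B, dist_comm B A] at hCA
  refine minkowski.linearIndependent_of_det_ne_zero <| ne_of_gt <| lt_of_lt_of_eq
    (cosh_gram_det_pos hBC (by linarith) (by linarith)) ?_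
  simp [Matrix.det_fin_three, minkowski_toHyperboloid, dist_comm B A, dist_comm C A, dist_comm C B]
  ring

/-- Hyperbolic Ceva theorem: if the cevians `AD`, `BE`, `CF` of a nondegenerate
hyperbolic triangle `ABC` meet at a common interior point `O`, then
`(sinh DB / sinh DC)(sinh EC / sinh EA)(sinh FA / sinh FB) = 1`. -/
theorem hyperbolic_ceva (A B C D E F O : UpperHalfPlane)
    (hnd : dist A B < dist A C + dist C B ∧ dist B C < dist B A + dist A C ∧
      dist C A < dist C B + dist B A)
    (hD : HypBtw B D C) (hE : HypBtw C E A) (hF : HypBtw A F B)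
    (hOA : HypBtw A O D) (hOB : HypBtw B O E) (hOC : HypBtw C O F) :
    (Real.sinh (dist D B) / Real.sinh (dist D C)) *
      (Real.sinh (dist E C) / Real.sinh (dist E A)) *
      (Real.sinh (dist F A) / Real.sinh (dist F B)) = 1 := by
  obtain ⟨hAB, hBC, hCA⟩ := hnd
  have hABC := linearIndependent_toHyperboloid hAB hBC hCA
  obtain ⟨x, y, z, hO⟩ := hABC.exists_eq_fin_three (by simp) (toHyperboloid O)
  obtain ⟨-, hyA, hzA⟩ := hABC.mul_eq_of_smul_eq_fin_three hO
    (smul_toHyperboloid_of_cevian hOA.2.2 hD.2.2)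
  obtain ⟨-, hzB, hxB⟩ :=
    (linearIndependent_toHyperboloid hBC hCA hAB).mul_eq_of_smul_eq_fin_three
      (by rw [hO]; abel) (smul_toHyperboloid_of_cevian hOB.2.2 hE.2.2)
  obtain ⟨-, hxC, hyC⟩ :=
    (linearIndependent_toHyperboloid hCA hAB hBC).mul_eq_of_smul_eq_fin_three
      (by rw [hO]; abel) (smul_toHyperboloid_of_cevian hOC.2.2 hF.2.2)
  have hsinh {X Y : ℍ} (h : X ≠ Y) : 0 < sinh (dist X Y) := sinh_pos_iff.2 (dist_pos.2 h)
  have key : sinh (dist A O) * sinh (dist B O) * sinh (dist C O) *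
      (sinh (dist B D) * sinh (dist C E) * sinh (dist A F)) =
      sinh (dist A O) * sinh (dist B O) * sinh (dist C O) *
      (sinh (dist D C) * sinh (dist E A) * sinh (dist F B)) := by
    -- both sides equal `x * y * z` times the three scale factors on `toHyperboloid O`
    linear_combination congr($hyA * $hzB * $hxC) - congr($hzA * $hxB * $hyC)
  have hO_pos := mul_pos (mul_pos (hsinh hOA.1.symm) (hsinh hOB.1.symm)) (hsinh hOC.1.symm)
  have hden_pos := mul_pos (mul_pos (hsinh hD.2.1) (hsinh hE.2.1)) (hsinh hF.2.1)
  rw [dist_comm D B, dist_comm E C, dist_comm F A, div_mul_div_comm, div_mul_div_comm,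
    div_eq_one_iff_eq hden_pos.ne']
  exact mul_left_cancel₀ hO_pos.ne' key
end

section
/- The area of a hyperbolic right triangle with fixed leg x and variable leg y is a strictly increasing function of y; explicitly, the area π/2 − (α+β) = arccos((cosh x · cosh y − 1)(cosh x + cosh y)/((cosh x · cosh y)² − 1)) is strictly increasing in y > 0. -/
open Real Set

/-!
Cancelling `cosh x · cosh y − 1` turns the argument of `arccos` into
`(cosh x + cosh y) / (cosh x · cosh y + 1)`. For `a = cosh x > 1` the map
`u ↦ (a + u) / (a u + 1)` is strictly decreasing on `u ≥ 0`, since its cross-multiplied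
difference is `(a² − 1)(u − v)`, and takes values in `[0, 1]` for `u ≥ 1`. So the area is
the composition of the decreasing `arccos`, this decreasing map and the increasing `cosh`.
-/

theorem sub_one_mul_div_sq_sub_one {K : Type*} [Field K] {t : K} (b : K) (ht : t ≠ 1) :
    (t - 1) * b / (t ^ 2 - 1) = b / (t + 1) := by
  rw [show t ^ 2 - 1 = (t - 1) * (t + 1) by ring, mul_div_mul_left _ _ (sub_ne_zero.mpr ht)]

theorem strictAntiOn_add_div_mul_add_one {a : ℝ} (ha : 1 < a) :
    StrictAntiOn (fun u => (a + u) / (a * u + 1)) (Ici 0) := by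
  intro u (hu : 0 ≤ u) v (hv : 0 ≤ v) huv
  rw [div_lt_div_iff₀ (by positivity) (by positivity)]
  nlinarith [mul_pos (sub_pos.mpr huv) (by nlinarith : (0 : ℝ) < a ^ 2 - 1)]

theorem add_div_mul_add_one_mem_Icc {a u : ℝ} (ha : 1 ≤ a) (hu : 1 ≤ u) :
    (a + u) / (a * u + 1) ∈ Icc 0 1 := by
  have hden : 0 < a * u + 1 := by positivity
  refine ⟨by positivity, (div_le_one hden).mpr ?_⟩
  nlinarith [mul_nonneg (sub_nonneg.mpr ha) (sub_nonneg.mpr hu)]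

/-- The area `arccos((cosh x cosh y − 1)(cosh x + cosh y)/((cosh x cosh y)² − 1))`
of a hyperbolic right triangle with fixed leg `x` is strictly increasing in the other
leg `y > 0`. -/
theorem area_strictMono_in_leg (x : ℝ) (hx : 0 < x) :
    StrictMonoOn (fun y : ℝ =>
      Real.arccos ((Real.cosh x * Real.cosh y - 1) * (Real.cosh x + Real.cosh y) /
        ((Real.cosh x * Real.cosh y) ^ 2 - 1)))
      (Ioi (0 : ℝ)) := by
  have ha : 1 < cosh x := one_lt_cosh.mpr hx.ne'
  have hcosh : StrictMonoOn cosh (Ioi 0) := cosh_strictMonoOn.mono Ioi_subset_Ici_self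
  have hcos_area : StrictAntiOn ((fun u => (cosh x + u) / (cosh x * u + 1)) ∘ cosh) (Ioi 0) :=
    (strictAntiOn_add_div_mul_add_one ha).comp_strictMonoOn hcosh
      fun y _ => (zero_le_one.trans (one_le_cosh y) : 0 ≤ cosh y)
  have hmaps : MapsTo ((fun u => (cosh x + u) / (cosh x * u + 1)) ∘ cosh) (Ioi 0) (Icc (-1) 1) :=
    fun y _ => Icc_subset_Icc (by norm_num) le_rfl
      (add_div_mul_add_one_mem_Icc ha.le (one_le_cosh y))
  refine (strictAntiOn_arccos.comp hcos_area hmaps).congr fun y _ => ?_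
  have hne : cosh x * cosh y ≠ 1 := (one_lt_mul_of_lt_of_le ha (one_le_cosh y)).ne'
  simp only [Function.comp_apply, sub_one_mul_div_sq_sub_one _ hne]
end
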